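/- arXiv:2306.15468 — 4 statements merged into one kernel-verified Lean document; each statement's English description precedes it below -/
import Mathlib

section
/- Let s : ℝ³ → ℝ be integrable with support contained in a compact set. Then ‖R‖ · ∫ s(x)/‖R−x‖ dx tends to ∫ s(x) dx as ‖R‖ → ∞; that is, for every ε > 0 there exists M > 0 such that for all R ∈ ℝ³ with ‖R‖ > M, |‖R‖ · ∫ s(x)/‖R−x‖ dx − ∫ s(x) dx| < ε. -/
open MeasureTheory

/-- Far-field limit: for a compactly supported integrable density `s`,
`‖R‖ · ∫ s(x)/‖R−x‖ dx → ∫ s(x) dx` as `‖R‖ → ∞`. -/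
theorem stmt_9 (s : EuclideanSpace ℝ (Fin 3) → ℝ) (hs : Integrable s)
    (K : Set (EuclideanSpace ℝ (Fin 3))) (hK : IsCompact K)
    (hsupp : Function.support s ⊆ K) :
    ∀ ε > 0, ∃ M > 0, ∀ R : EuclideanSpace ℝ (Fin 3), M < ‖R‖ →
      |‖R‖ * (∫ x : EuclideanSpace ℝ (Fin 3), s x / ‖R - x‖)
        - ∫ x : EuclideanSpace ℝ (Fin 3), s x| < ε := by
  obtain ⟨r, hr0, hKr⟩ := hK.isBounded.subset_closedBall_lt 0 0
  intro ε hε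
  set I : ℝ := ∫ x, |s x| with hI
  have hI0 : 0 ≤ I := integral_nonneg fun x => abs_nonneg _
  refine ⟨r + r * I / ε + 1, by positivity, fun R hR => ?_⟩
  have hd0 : (0:ℝ) < ‖R‖ - r := by
    have : 0 ≤ r * I / ε := by positivity
    linarith
  -- pointwise norm bound on x in the support
  have hxr : ∀ x, s x ≠ 0 → ‖x‖ ≤ r := by
    intro x hx
    have : x ∈ K := hsupp hx
    have := hKr this
    simpa [Metric.mem_closedBall, dist_zero_right] using this
  have hden : ∀ x, s x ≠ 0 → ‖R‖ - r ≤ ‖R - x‖ := by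
    intro x hx
    have h1 : ‖R‖ - ‖x‖ ≤ ‖R - x‖ := norm_sub_norm_le R x
    have h2 := hxr x hx
    linarith
  have hmeas : AEStronglyMeasurable (fun x => s x / ‖R - x‖)
      (volume : Measure (EuclideanSpace ℝ (Fin 3))) := by
    simp only [div_eq_mul_inv]
    exact hs.aestronglyMeasurable.mul
      ((measurable_const.sub measurable_id).norm.inv).aestronglyMeasurable
  have hbound : ∀ x, ‖s x / ‖R - x‖‖ ≤ |s x| * (‖R‖ - r)⁻¹ := by
    intro x
    by_cases hx : s x = 0
    · simp [hx]
    · have h1 := hden x hx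
      have h2 : 0 < ‖R - x‖ := lt_of_lt_of_le hd0 h1
      rw [Real.norm_eq_abs, abs_div, abs_of_pos h2, div_eq_mul_inv]
      exact mul_le_mul_of_nonneg_left (inv_anti₀ hd0 h1) (abs_nonneg _)
  have hgInt : Integrable (fun x => s x / ‖R - x‖) :=
    (hs.abs.mul_const _).mono' hmeas (Filter.Eventually.of_forall hbound)
  have hdiff : ‖R‖ * (∫ x, s x / ‖R - x‖) - ∫ x, s x
      = ∫ x, (‖R‖ * (s x / ‖R - x‖) - s x) := by
    rw [integral_sub (hgInt.const_mul _) hs, integral_const_mul]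
  rw [hdiff]
  have hptw : ∀ x, |‖R‖ * (s x / ‖R - x‖) - s x| ≤ |s x| * (r * (‖R‖ - r)⁻¹) := by
    intro x
    by_cases hx : s x = 0
    · simp [hx]
    · have h1 := hden x hx
      have h2 : 0 < ‖R - x‖ := lt_of_lt_of_le hd0 h1
      have key : ‖R‖ * (s x / ‖R - x‖) - s x = s x * ((‖R‖ - ‖R - x‖) / ‖R - x‖) := by
        field_simp
      rw [key, abs_mul, abs_div, abs_of_pos h2]
      have h3 : |‖R‖ - ‖R - x‖| ≤ r := by
        have h4 : |‖R‖ - ‖R - x‖| ≤ ‖R - (R - x)‖ := abs_norm_sub_norm_le R (R - x)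
        have h5 : R - (R - x) = x := by abel
        rw [h5] at h4
        exact h4.trans (hxr x hx)
      have h6 : |‖R‖ - ‖R - x‖| / ‖R - x‖ ≤ r * (‖R‖ - r)⁻¹ := by
        rw [div_eq_mul_inv]
        exact mul_le_mul h3 (inv_anti₀ hd0 h1) (by positivity) (le_of_lt hr0)
      exact mul_le_mul_of_nonneg_left h6 (abs_nonneg _)
  have habs : |∫ x, (‖R‖ * (s x / ‖R - x‖) - s x)| ≤ I * (r * (‖R‖ - r)⁻¹) := by
    calc |∫ x, (‖R‖ * (s x / ‖R - x‖) - s x)|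
        ≤ ∫ x, |‖R‖ * (s x / ‖R - x‖) - s x| := by
          simpa [Real.norm_eq_abs] using
            norm_integral_le_integral_norm (fun x => ‖R‖ * (s x / ‖R - x‖) - s x)
      _ ≤ ∫ x, |s x| * (r * (‖R‖ - r)⁻¹) := by
          apply integral_mono ((((hgInt.const_mul ‖R‖).sub hs)).abs)
            (hs.abs.mul_const _) hptw
      _ = I * (r * (‖R‖ - r)⁻¹) := integral_mul_const _ _
  refine lt_of_le_of_lt habs ?_
  have h7 : r * I / ε + 1 < ‖R‖ - r := by linarith
  have h8 : ε * (r * I / ε + 1) = r * I + ε := by field_simp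
  have h9 : ε * (r * I / ε + 1) < ε * (‖R‖ - r) := by
    exact mul_lt_mul_of_pos_left h7 hε
  have h10 : I * r < ε * (‖R‖ - r) := by nlinarith
  have : I * (r * (‖R‖ - r)⁻¹) = (I * r) / (‖R‖ - r) := by ring
  rw [this, div_lt_iff₀ hd0]
  nlinarith
end

section
/- Let s : ℝ³ → ℝ be integrable with support contained in the closed ball of radius ρ > 0 centered at the origin, and let R ∈ ℝ³ with ‖R‖ > ρ. Then |∫ s(x)/‖R−x‖ dx − (1/‖R‖)·∫ s(x) dx| ≤ (ρ/(‖R‖·(‖R‖−ρ))) · ∫ |s(x)| dx. -/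
/-!
On the support of `s` the kernel `x ↦ 1 / ‖R - x‖` differs from its value `1 / ‖R‖` at the
origin by at most `ρ / (‖R‖ (‖R‖ - ρ))`, since `|‖R‖ - ‖R - x‖| ≤ ‖x‖ ≤ ρ` and
`‖R - x‖ ≥ ‖R‖ - ρ`. Integrating this pointwise bound against `|s|` gives the estimate.
-/

open MeasureTheory

theorem abs_inv_norm_sub_sub_inv_norm_le {E : Type*} [SeminormedAddCommGroup E] {R x : E}
    {ρ : ℝ} (hx : ‖x‖ ≤ ρ) (hR : ρ < ‖R‖) :
    |‖R - x‖⁻¹ - ‖R‖⁻¹| ≤ ρ / (‖R‖ * (‖R‖ - ρ)) := by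
  have hgap : 0 < ‖R‖ - ρ := sub_pos.mpr hR
  have hRpos : 0 < ‖R‖ := (norm_nonneg x).trans_lt (hx.trans_lt hR)
  have hfar : ‖R‖ - ρ ≤ ‖R - x‖ := by linarith [norm_sub_norm_le R x]
  have hfarpos : 0 < ‖R - x‖ := hgap.trans_le hfar
  have hρ : 0 ≤ ρ := (norm_nonneg x).trans hx
  have hnum : |‖R‖ - ‖R - x‖| ≤ ρ :=
    (abs_norm_sub_norm_le R (R - x)).trans (by rwa [sub_sub_cancel])
  calc |‖R - x‖⁻¹ - ‖R‖⁻¹| = |‖R‖ - ‖R - x‖| / (‖R‖ * ‖R - x‖) := by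
        rw [inv_sub_inv hfarpos.ne' hRpos.ne', abs_div, abs_of_pos (mul_pos hfarpos hRpos),
          mul_comm ‖R - x‖]
    _ ≤ ρ / (‖R‖ * (‖R‖ - ρ)) := by gcongr

theorem abs_integral_mul_sub_const_mul_integral_le {α : Type*} [MeasurableSpace α]
    {μ : Measure α} {s k : α → ℝ} {c C : ℝ} (hs : Integrable s μ)
    (hk : AEStronglyMeasurable k μ) (hclose : ∀ x, s x ≠ 0 → |k x - c| ≤ C) :
    |∫ x, s x * k x ∂μ - c * ∫ x, s x ∂μ| ≤ C * ∫ x, |s x| ∂μ := by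
  have hpointwise : ∀ x, |s x * (k x - c)| ≤ C * |s x| := by
    intro x
    by_cases hsx : s x = 0
    · simp [hsx]
    · rw [abs_mul, mul_comm C]
      exact mul_le_mul_of_nonneg_left (hclose x hsx) (abs_nonneg _)
  have hint : Integrable (fun x ↦ s x * (k x - c)) μ :=
    (hs.abs.const_mul C).mono' (hs.aestronglyMeasurable.mul (hk.sub aestronglyMeasurable_const))
      (.of_forall hpointwise)
  calc |∫ x, s x * k x ∂μ - c * ∫ x, s x ∂μ| = |∫ x, s x * (k x - c) ∂μ| := by
        have hsk : Integrable (fun x ↦ s x * k x) μ :=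
          (hint.add (hs.mul_const c)).congr (.of_forall fun x ↦ by simp only [Pi.add_apply]; ring)
        simp_rw [mul_sub]
        rw [integral_sub hsk (hs.mul_const c), integral_mul_const, mul_comm c]
    _ ≤ ∫ x, |s x * (k x - c)| ∂μ := abs_integral_le_integral_abs
    _ ≤ ∫ x, C * |s x| ∂μ := integral_mono hint.abs (hs.abs.const_mul C) hpointwise
    _ = C * ∫ x, |s x| ∂μ := integral_const_mul _ _

theorem stmt_10_general (s : EuclideanSpace ℝ (Fin 3) → ℝ) (hs : Integrable s)
    (ρ : ℝ)
    (hsupp : Function.support s ⊆ Metric.closedBall (0 : EuclideanSpace ℝ (Fin 3)) ρ)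
    (R : EuclideanSpace ℝ (Fin 3)) (hR : ρ < ‖R‖) :
    |(∫ x : EuclideanSpace ℝ (Fin 3), s x / ‖R - x‖)
        - (1 / ‖R‖) * ∫ x : EuclideanSpace ℝ (Fin 3), s x|
      ≤ (ρ / (‖R‖ * (‖R‖ - ρ))) * ∫ x : EuclideanSpace ℝ (Fin 3), |s x| := by
  simp only [div_eq_mul_inv (s _), one_div]
  refine abs_integral_mul_sub_const_mul_integral_le hs
    (measurable_const.sub measurable_id).norm.inv.aestronglyMeasurable fun x hsx ↦ ?_
  exact abs_inv_norm_sub_sub_inv_norm_le (mem_closedBall_zero_iff.mp (hsupp hsx)) hR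

/-- Quantitative far-field expansion: the leading term of `∫ s(x)/‖R−x‖ dx` in negative
powers of `‖R‖` is `(1/‖R‖)·∫ s`, with first-order remainder bound. -/
theorem stmt_10 (s : EuclideanSpace ℝ (Fin 3) → ℝ) (hs : Integrable s)
    (ρ : ℝ) (hρ : 0 < ρ)
    (hsupp : Function.support s ⊆ Metric.closedBall (0 : EuclideanSpace ℝ (Fin 3)) ρ)
    (R : EuclideanSpace ℝ (Fin 3)) (hR : ρ < ‖R‖) :
    |(∫ x : EuclideanSpace ℝ (Fin 3), s x / ‖R - x‖)
        - (1 / ‖R‖) * ∫ x : EuclideanSpace ℝ (Fin 3), s x|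
      ≤ (ρ / (‖R‖ * (‖R‖ - ρ))) * ∫ x : EuclideanSpace ℝ (Fin 3), |s x| :=
  stmt_10_general s hs ρ hsupp R hR
end

section
/- For every R ∈ ℝ³, ∫_{[0,1]³} 1/‖R−x‖ dx ≤ 3, where the integral is over the unit cube [0,1]³ ⊂ ℝ³. -/
open MeasureTheory

open Set Metric Real

/-- The Coulomb integral over the unit cube is uniformly bounded by `3`. -/
theorem stmt_13 (R : EuclideanSpace ℝ (Fin 3)) :
    (∫ x in {x : EuclideanSpace ℝ (Fin 3) | ∀ i, x i ∈ Set.Icc (0 : ℝ) 1},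
      1 / ‖R - x‖) ≤ 3 := by
  simp only [one_div]
  set Ω : Set (EuclideanSpace ℝ (Fin 3)) := {x : EuclideanSpace ℝ (Fin 3) | ∀ i, x i ∈ Set.Icc (0 : ℝ) 1} with hΩdef
  set f : EuclideanSpace ℝ (Fin 3) → ℝ := fun x => ‖R - x‖⁻¹ with hfdef
  have hf_meas : Measurable f := (measurable_const.sub measurable_id).norm.inv
  have hf_nn : ∀ x : EuclideanSpace ℝ (Fin 3), 0 ≤ f x := fun x => inv_nonneg.2 (norm_nonneg _)
  -- measurability of the cube
  have hΩmeas : MeasurableSet Ω := by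
    have : Ω = ⋂ i, (fun x : EuclideanSpace ℝ (Fin 3) => x i) ⁻¹' Set.Icc (0 : ℝ) 1 := by
      ext x; simp [hΩdef]
    rw [this]
    exact MeasurableSet.iInter fun i =>
      measurableSet_Icc.preimage
        ((measurable_pi_apply i).comp (MeasurableEquiv.toLp 2 (Fin 3 → ℝ)).symm.measurable)
  -- the cube has volume one
  have hΩvol : volume Ω = 1 := by
    have h1 : (MeasurableEquiv.toLp 2 (Fin 3 → ℝ)).symm.symm ⁻¹' Ω =
        Set.univ.pi fun _ : Fin 3 => Set.Icc (0 : ℝ) 1 := by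
      ext y
      simp [hΩdef, MeasurableEquiv.toLp_apply, Set.mem_univ_pi, Set.mem_Icc, Pi.le_def,
        forall_and]
    have h2 := ((EuclideanSpace.volume_preserving_symm_measurableEquiv_toLp (Fin 3)).symm _).measure_preimage
      hΩmeas.nullMeasurableSet
    rw [h1] at h2
    rw [← h2, volume_pi_pi]
    simp [Real.volume_Icc]
  -- reduce to a lintegral bound
  show (∫ x in Ω, f x) ≤ 3
  rw [integral_eq_lintegral_of_nonneg_ae (Filter.Eventually.of_forall hf_nn)
    hf_meas.aestronglyMeasurable]
  refine ENNReal.toReal_le_of_le_ofReal (by norm_num) ?_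
  -- layer cake
  rw [lintegral_eq_lintegral_meas_le (volume.restrict Ω)
    (Filter.Eventually.of_forall hf_nn) hf_meas.aemeasurable]
  -- level set bound for large t
  have hlevel : ∀ t : ℝ, 0 < t →
      (volume.restrict Ω) {a : EuclideanSpace ℝ (Fin 3) | t ≤ f a} ≤
        min 1 (ENNReal.ofReal ((4 * π / 3) * t ^ (-3 : ℝ))) := by
    intro t ht
    have hmono : (volume.restrict Ω) {a : EuclideanSpace ℝ (Fin 3) | t ≤ f a} ≤ volume Ω := by
      rw [Measure.restrict_apply' hΩmeas]
      exact measure_mono Set.inter_subset_right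
    refine le_min (hΩvol ▸ hmono) ?_
    have hsub : {a : EuclideanSpace ℝ (Fin 3) | t ≤ f a} ⊆ closedBall R t⁻¹ := by
      intro a ha
      simp only [Set.mem_setOf_eq, hfdef] at ha
      have hne : a ≠ R := by
        rintro rfl
        simp at ha
        linarith
      have hpos : 0 < ‖R - a‖ := by
        rw [norm_pos_iff, sub_ne_zero]
        exact fun h => hne h.symm
      have h1 : ‖R - a‖ ≤ t⁻¹ := by
        have h2 : ‖R - a‖ * ‖R - a‖⁻¹ = 1 := mul_inv_cancel₀ hpos.ne'
        have h3 : t * t⁻¹ = 1 := mul_inv_cancel₀ ht.ne'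
        nlinarith [mul_le_mul_of_nonneg_left ha hpos.le]
      rw [mem_closedBall, dist_eq_norm, ← norm_neg, neg_sub]
      exact h1
    calc (volume.restrict Ω) {a : EuclideanSpace ℝ (Fin 3) | t ≤ f a}
        ≤ volume (closedBall R t⁻¹) := by
          rw [Measure.restrict_apply' hΩmeas]
          exact measure_mono (Set.inter_subset_left.trans hsub)
      _ = ENNReal.ofReal ((4 * π / 3) * t ^ (-3 : ℝ)) := by
          rw [EuclideanSpace.volume_closedBall]
          have hcard : Fintype.card (Fin 3) = 3 := by simp
          rw [hcard]
          have hG : Real.Gamma ((3 : ℕ) / 2 + 1) = 3 / 4 * Real.sqrt π := by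
            push_cast
            rw [show (3 : ℝ) / 2 + 1 = (1 / 2 + 1) + 1 by ring,
              Real.Gamma_add_one (by norm_num), Real.Gamma_add_one (by norm_num),
              Real.Gamma_one_half_eq]
            ring
          have hsq : Real.sqrt π ^ 3 = π * Real.sqrt π := by
            rw [pow_succ, Real.sq_sqrt Real.pi_nonneg, mul_comm]
          have hsπ : Real.sqrt π ≠ 0 := by
            positivity
          have hconst : Real.sqrt π ^ 3 / Real.Gamma ((3 : ℕ) / 2 + 1) = 4 * π / 3 := by
            rw [hG, hsq]
            field_simp
          rw [hconst]
          have hrpow : t ^ (-3 : ℝ) = t⁻¹ ^ 3 := by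
            rw [show (-3 : ℝ) = -((3 : ℕ) : ℝ) by norm_num, Real.rpow_neg ht.le,
              Real.rpow_natCast, ← inv_pow]
          rw [hrpow, ENNReal.ofReal_mul (by positivity : (0:ℝ) ≤ 4 * π / 3),
            ENNReal.ofReal_pow (inv_nonneg.2 ht.le)]
          exact mul_comm _ _
  -- split the t-integral at 8/5
  have hsplit : Set.Ioi (0 : ℝ) = Set.Ioc (0 : ℝ) (8 / 5) ∪ Set.Ioi (8 / 5 : ℝ) :=
    (Set.Ioc_union_Ioi_eq_Ioi (by norm_num)).symm
  rw [hsplit, lintegral_union measurableSet_Ioi (Set.Ioc_disjoint_Ioi le_rfl)]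
  have hpiece1 : (∫⁻ t in Set.Ioc (0 : ℝ) (8 / 5),
      (volume.restrict Ω) {a : EuclideanSpace ℝ (Fin 3) | t ≤ f a}) ≤ ENNReal.ofReal (8 / 5) := by
    calc (∫⁻ t in Set.Ioc (0 : ℝ) (8 / 5), (volume.restrict Ω) {a : EuclideanSpace ℝ (Fin 3) | t ≤ f a})
        ≤ ∫⁻ _ in Set.Ioc (0 : ℝ) (8 / 5), 1 := by
          refine setLIntegral_mono' measurableSet_Ioc fun t ht => ?_
          exact (hlevel t ht.1).trans (min_le_left _ _)
      _ = ENNReal.ofReal (8 / 5) := by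
          rw [setLIntegral_one, Real.volume_Ioc]
          norm_num
  have hpiece2 : (∫⁻ t in Set.Ioi (8 / 5 : ℝ),
      (volume.restrict Ω) {a : EuclideanSpace ℝ (Fin 3) | t ≤ f a}) ≤ ENNReal.ofReal (25 * π / 96) := by
    have hb : (∫⁻ t in Set.Ioi (8 / 5 : ℝ), (volume.restrict Ω) {a : EuclideanSpace ℝ (Fin 3) | t ≤ f a})
        ≤ ∫⁻ t in Set.Ioi (8 / 5 : ℝ), ENNReal.ofReal ((4 * π / 3) * t ^ (-3 : ℝ)) := by
      refine setLIntegral_mono' measurableSet_Ioi fun t ht => ?_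
      have ht0 : (0 : ℝ) < t := lt_trans (by norm_num) ht
      exact (hlevel t ht0).trans (min_le_right _ _)
    refine hb.trans ?_
    have hInt : IntegrableOn (fun t : ℝ => (4 * π / 3) * t ^ (-3 : ℝ))
        (Set.Ioi (8 / 5 : ℝ)) := by
      exact (integrableOn_Ioi_rpow_of_lt (by norm_num) (by norm_num)).const_mul _
    rw [← ofReal_integral_eq_lintegral_ofReal hInt]
    · refine ENNReal.ofReal_le_ofReal ?_
      rw [MeasureTheory.integral_const_mul,
        integral_Ioi_rpow_of_lt (by norm_num) (by norm_num : (0:ℝ) < 8 / 5)]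
      have : ((8 : ℝ) / 5) ^ ((-3 : ℝ) + 1) = 25 / 64 := by
        rw [show (-3 : ℝ) + 1 = ((-2 : ℤ) : ℝ) by norm_num, Real.rpow_intCast]
        norm_num
      rw [this]
      nlinarith [Real.pi_pos]
    · filter_upwards [ae_restrict_mem measurableSet_Ioi] with t ht
      have ht0 : (0 : ℝ) < t := lt_trans (by norm_num) ht
      positivity
  calc _ ≤ ENNReal.ofReal (8 / 5) + ENNReal.ofReal (25 * π / 96) :=
        add_le_add hpiece1 hpiece2
    _ ≤ ENNReal.ofReal 3 := by
        rw [← ENNReal.ofReal_add (by norm_num) (by positivity)]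
        refine ENNReal.ofReal_le_ofReal ?_
        nlinarith [Real.pi_lt_d2]
end

section
/- Let c = (1/2, 1/2, 1/2) be the center of the unit cube [0,1]³ ⊂ ℝ³. Then for every R ∈ ℝ³, ∫_{[0,1]³} 1/‖R−x‖ dx ≤ ∫_{[0,1]³} 1/‖c−x‖ dx. -/
open MeasureTheory

namespace Stmt14Aux

open Set
open scoped ENNReal

noncomputable section

/-! ### The 1D kernel and its basic properties -/

def h (B u : ℝ) : ℝ := 1 / Real.sqrt (B + u ^ 2)

lemma h_cont {B : ℝ} (hB : 0 < B) : Continuous (h B) := by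
  apply Continuous.div continuous_const
  · exact Real.continuous_sqrt.comp (continuous_const.add (continuous_pow 2))
  · intro u
    exact ne_of_gt (Real.sqrt_pos.2 (by positivity))

lemma h_nonneg (B u : ℝ) : 0 ≤ h B u := by
  unfold h; positivity

lemma h_anti {B : ℝ} (hB : 0 < B) {u v : ℝ} (huv : u ^ 2 ≤ v ^ 2) : h B v ≤ h B u := by
  unfold h
  apply one_div_le_one_div_of_le
  · exact Real.sqrt_pos.2 (by positivity)
  · exact Real.sqrt_le_sqrt (by linarith)

lemma h_even (B u : ℝ) : h B (-u) = h B u := by simp [h]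

lemma h_ii {B : ℝ} (hB : 0 < B) (a b : ℝ) : IntervalIntegrable (h B) volume a b :=
  (h_cont hB).intervalIntegrable a b

/-! ### The 1D sliding-interval inequality -/

lemma Phi_le_half {B : ℝ} (hB : 0 < B) {t : ℝ} (ht : 2⁻¹ ≤ t) :
    ∫ u in (t-1)..t, h B u ≤ ∫ u in (2⁻¹-1 : ℝ)..2⁻¹, h B u := by
  have c1 : Continuous fun w : ℝ => h B (1 - w) :=
    (h_cont hB).comp (continuous_const.sub continuous_id)
  have c2 : Continuous fun w : ℝ => h B (-w) := (h_cont hB).comp continuous_neg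
  have hXY : ∫ w in (1-t)..(2⁻¹:ℝ), h B (1 - w) ≤ ∫ w in (1-t)..(2⁻¹:ℝ), h B (-w) := by
    apply intervalIntegral.integral_mono_on (by linarith)
      (c1.intervalIntegrable _ _) (c2.intervalIntegrable _ _)
    intro w hw
    exact h_anti hB (by nlinarith [hw.2])
  have e2 : ∫ w in (1-t)..(2⁻¹:ℝ), h B (1 - w) = ∫ u in (2⁻¹:ℝ)..t, h B u := by
    rw [intervalIntegral.integral_comp_sub_left (h B) 1]
    norm_num
  have e3 : ∫ w in (1-t)..(2⁻¹:ℝ), h B (-w) = ∫ u in (-2⁻¹:ℝ)..(t-1), h B u := by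
    rw [intervalIntegral.integral_comp_neg (h B)]
    norm_num
  have a1 : ∫ u in (t-1)..t, h B u
      = (∫ u in (t-1)..(2⁻¹:ℝ), h B u) + ∫ u in (2⁻¹:ℝ)..t, h B u :=
    (intervalIntegral.integral_add_adjacent_intervals (h_ii hB _ _) (h_ii hB _ _)).symm
  have a2 : ∫ u in (2⁻¹-1 : ℝ)..2⁻¹, h B u
      = (∫ u in (2⁻¹-1:ℝ)..(t-1), h B u) + ∫ u in (t-1)..(2⁻¹:ℝ), h B u :=
    (intervalIntegral.integral_add_adjacent_intervals (h_ii hB _ _) (h_ii hB _ _)).symm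
  have a3 : ∫ u in (2⁻¹-1:ℝ)..(t-1), h B u = ∫ u in (-2⁻¹:ℝ)..(t-1), h B u := by norm_num
  linarith

lemma Phi_le {B : ℝ} (hB : 0 < B) (t : ℝ) :
    ∫ u in (t-1)..t, h B u ≤ ∫ u in (2⁻¹-1 : ℝ)..2⁻¹, h B u := by
  rcases le_total (2⁻¹ : ℝ) t with ht | ht
  · exact Phi_le_half hB ht
  · have eflip : ∫ u in (t-1)..t, h B u = ∫ u in ((1-t)-1)..(1-t), h B u := by
      have : ∫ w in ((1-t)-1)..(1-t), h B (-w) = ∫ u in (t-1)..t, h B u := by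
        rw [intervalIntegral.integral_comp_neg (h B)]
        norm_num
      rw [← this]
      simp only [h_even]
    rw [eflip]
    exact Phi_le_half hB (by linarith)

lemma oneD {B : ℝ} (hB : 0 < B) (t : ℝ) :
    ∫ z in Icc (0:ℝ) 1, h B (t - z) ≤ ∫ z in Icc (0:ℝ) 1, h B (2⁻¹ - z) := by
  have conv : ∀ s : ℝ, ∫ z in Icc (0:ℝ) 1, h B (s - z) = ∫ u in (s-1)..s, h B u := by
    intro s
    rw [MeasureTheory.integral_Icc_eq_integral_Ioc,
      ← intervalIntegral.integral_of_le (zero_le_one),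
      intervalIntegral.integral_comp_sub_left (h B) s]
    norm_num
  rw [conv, conv]
  exact Phi_le hB t

lemma oneD_lin {B : ℝ} (hB : 0 < B) (t : ℝ) :
    ∫⁻ z in Icc (0:ℝ) 1, ENNReal.ofReal (h B (t - z))
      ≤ ∫⁻ z in Icc (0:ℝ) 1, ENNReal.ofReal (h B (2⁻¹ - z)) := by
  have ic : ∀ s : ℝ, IntegrableOn (fun z => h B (s - z)) (Icc (0:ℝ) 1) volume := by
    intro s
    exact ((h_cont hB).comp (continuous_const.sub continuous_id)).integrableOn_Icc
  rw [← ofReal_integral_eq_lintegral_ofReal (ic t) (ae_of_all _ fun z => h_nonneg _ _),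
    ← ofReal_integral_eq_lintegral_ofReal (ic 2⁻¹) (ae_of_all _ fun z => h_nonneg _ _)]
  exact ENNReal.ofReal_le_ofReal (oneD hB t)

/-! ### The triple iterated integral -/

lemma meas_aux {α : Type*} [MeasurableSpace α] {g : α → ℝ} (hg : Measurable g) :
    Measurable fun p => ENNReal.ofReal (1 / Real.sqrt (g p)) := by
  apply Measurable.ennreal_ofReal
  simp only [one_div]
  exact (Real.continuous_sqrt.measurable.comp hg).inv

def T3 (a b c : ℝ) : ℝ≥0∞ :=
  ∫⁻ x in Icc (0:ℝ) 1, ∫⁻ y in Icc (0:ℝ) 1, ∫⁻ z in Icc (0:ℝ) 1,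
    ENNReal.ofReal (1 / Real.sqrt ((a - x)^2 + (b - y)^2 + (c - z)^2))

lemma ae_ne (a : ℝ) : ∀ᵐ x : ℝ ∂(volume.restrict (Icc (0:ℝ) 1)), x ≠ a := by
  apply Filter.Eventually.filter_mono (ae_mono Measure.restrict_le_self)
  rw [ae_iff]
  simpa using measure_singleton a

lemma swap23 (a b c x : ℝ) :
    (∫⁻ y in Icc (0:ℝ) 1, ∫⁻ z in Icc (0:ℝ) 1,
      ENNReal.ofReal (1 / Real.sqrt ((a - x)^2 + (b - y)^2 + (c - z)^2)))
    = ∫⁻ y in Icc (0:ℝ) 1, ∫⁻ z in Icc (0:ℝ) 1,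
      ENNReal.ofReal (1 / Real.sqrt ((a - x)^2 + (c - y)^2 + (b - z)^2)) := by
  rw [lintegral_lintegral_swap (f := fun y z =>
    ENNReal.ofReal (1 / Real.sqrt ((a - x)^2 + (b - y)^2 + (c - z)^2)))
    (meas_aux (by fun_prop)).aemeasurable]
  simp only [show ∀ y z : ℝ, (a - x)^2 + (b - y)^2 + (c - z)^2
    = (a - x)^2 + (c - z)^2 + (b - y)^2 from fun y z => by ring]

lemma T3_swap23 (a b c : ℝ) : T3 a b c = T3 a c b := by
  unfold T3
  exact lintegral_congr fun x => swap23 a b c x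

set_option maxHeartbeats 1000000 in
lemma T3_swap12 (a b c : ℝ) : T3 a b c = T3 b a c := by
  unfold T3
  have hF : Measurable fun q : (ℝ × ℝ) × ℝ =>
      ENNReal.ofReal (1 / Real.sqrt ((a - q.1.1)^2 + (b - q.1.2)^2 + (c - q.2)^2)) :=
    meas_aux (by fun_prop)
  have hm : Measurable (Function.uncurry fun x y : ℝ => ∫⁻ z in Icc (0:ℝ) 1,
      ENNReal.ofReal (1 / Real.sqrt ((a - x)^2 + (b - y)^2 + (c - z)^2))) :=
    hF.lintegral_prod_right'
  rw [lintegral_lintegral_swap hm.aemeasurable]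
  simp only [show ∀ x y z : ℝ, (a - x)^2 + (b - y)^2 + (c - z)^2
    = (b - y)^2 + (a - x)^2 + (c - z)^2 from fun x y z => by ring]

lemma step1 (a b c : ℝ) : T3 a b c ≤ T3 a b 2⁻¹ := by
  unfold T3
  apply lintegral_mono_ae
  filter_upwards [ae_ne a] with x hx
  apply lintegral_mono
  intro y
  have hB : 0 < (a - x)^2 + (b - y)^2 := by
    have h1 : 0 < (a - x)^2 := by
      have : a - x ≠ 0 := sub_ne_zero.mpr fun e => hx e.symm
      positivity
    positivity
  exact oneD_lin hB c

lemma main3 (a b c : ℝ) : T3 a b c ≤ T3 2⁻¹ 2⁻¹ 2⁻¹ :=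
  calc T3 a b c ≤ T3 a b 2⁻¹ := step1 a b c
    _ = T3 a 2⁻¹ b := T3_swap23 a b 2⁻¹
    _ ≤ T3 a 2⁻¹ 2⁻¹ := step1 _ _ _
    _ = T3 2⁻¹ a 2⁻¹ := T3_swap12 _ _ _
    _ = T3 2⁻¹ 2⁻¹ a := T3_swap23 _ _ _
    _ ≤ T3 2⁻¹ 2⁻¹ 2⁻¹ := step1 _ _ _

/-! ### Finiteness of the centered integral -/

def g0 (u : ℝ) : ℝ := 1 / Real.sqrt |2⁻¹ - u|

lemma g0_nonneg (u : ℝ) : 0 ≤ g0 u := by unfold g0; positivity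

lemma ptbound {x y : ℝ} (z : ℝ) (hx : x ≠ 2⁻¹) (hy : y ≠ 2⁻¹) :
    1 / Real.sqrt ((2⁻¹ - x)^2 + (2⁻¹ - y)^2 + (2⁻¹ - z)^2) ≤ g0 x * g0 y := by
  have hp : 0 < |2⁻¹ - x| := abs_pos.2 (sub_ne_zero.2 fun e => hx e.symm)
  have hq : 0 < |2⁻¹ - y| := abs_pos.2 (sub_ne_zero.2 fun e => hy e.symm)
  have e1 : g0 x * g0 y = 1 / Real.sqrt (|2⁻¹ - x| * |2⁻¹ - y|) := by
    unfold g0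
    rw [Real.sqrt_mul (abs_nonneg _)]
    ring
  rw [e1]
  apply one_div_le_one_div_of_le
  · exact Real.sqrt_pos.2 (by positivity)
  · apply Real.sqrt_le_sqrt
    nlinarith [sq_nonneg (|2⁻¹ - x| - |2⁻¹ - y|), sq_abs (2⁻¹ - x), sq_abs (2⁻¹ - y),
      sq_nonneg (2⁻¹ - z), mul_pos hp hq]

lemma g0_integrable : IntegrableOn g0 (Icc (0:ℝ) 1) volume := by
  have h2 : IntegrableOn g0 (Icc (2⁻¹:ℝ) 1) volume := by
    have hii : IntervalIntegrable (fun x : ℝ => x ^ (-(1/2) : ℝ)) volume 0 2⁻¹ :=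
      intervalIntegral.intervalIntegrable_rpow' (by norm_num)
    have hii2 : IntervalIntegrable (fun x : ℝ => (x - 2⁻¹) ^ (-(1/2) : ℝ)) volume 2⁻¹ 1 := by
      have h := hii.comp_sub_right 2⁻¹
      simp only [show (0:ℝ)+2⁻¹ = 2⁻¹ from by norm_num,
        show (2⁻¹:ℝ)+2⁻¹ = 1 from by norm_num] at h
      exact h
    have h3 : IntegrableOn (fun x : ℝ => (x - 2⁻¹) ^ (-(1/2) : ℝ)) (Icc (2⁻¹:ℝ) 1) volume := by
      have := (intervalIntegrable_iff_integrableOn_Ioc_of_le (by norm_num : (2⁻¹:ℝ) ≤ 1)).1 hii2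
      exact this.congr_set_ae Ioc_ae_eq_Icc.symm
    apply h3.congr_fun ?_ measurableSet_Icc
    intro u hu
    dsimp only
    unfold g0
    rw [abs_of_nonpos (by linarith [hu.1]), neg_sub,
      Real.rpow_neg (by linarith [hu.1]), ← Real.sqrt_eq_rpow, one_div]
  have h1 : IntegrableOn g0 (Icc (0:ℝ) 2⁻¹) volume := by
    have hii : IntervalIntegrable (fun x : ℝ => x ^ (-(1/2) : ℝ)) volume 0 2⁻¹ :=
      intervalIntegral.intervalIntegrable_rpow' (by norm_num)
    have hii2 : IntervalIntegrable (fun x : ℝ => (2⁻¹ - x) ^ (-(1/2) : ℝ)) volume 0 2⁻¹ := by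
      have h := (hii.comp_sub_left 2⁻¹).symm
      simp only [show (2⁻¹:ℝ)-2⁻¹ = 0 from by norm_num,
        show (2⁻¹:ℝ)-0 = 2⁻¹ from by norm_num] at h
      exact h
    have h3 : IntegrableOn (fun x : ℝ => (2⁻¹ - x) ^ (-(1/2) : ℝ)) (Icc (0:ℝ) 2⁻¹) volume := by
      have := (intervalIntegrable_iff_integrableOn_Ioc_of_le (by norm_num : (0:ℝ) ≤ 2⁻¹)).1 hii2
      exact this.congr_set_ae Ioc_ae_eq_Icc.symm
    apply h3.congr_fun ?_ measurableSet_Icc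
    intro u hu
    dsimp only
    unfold g0
    rw [abs_of_nonneg (by linarith [hu.2]),
      Real.rpow_neg (by linarith [hu.2]), ← Real.sqrt_eq_rpow, one_div]
  have : Icc (0:ℝ) 1 = Icc (0:ℝ) 2⁻¹ ∪ Icc (2⁻¹:ℝ) 1 :=
    (Icc_union_Icc_eq_Icc (by norm_num) (by norm_num)).symm
  rw [this]
  exact h1.union h2

def K0 : ℝ≥0∞ := ∫⁻ u in Icc (0:ℝ) 1, ENNReal.ofReal (g0 u)

lemma K0_lt_top : K0 < ∞ := g0_integrable.lintegral_lt_top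

lemma T3_fin : T3 2⁻¹ 2⁻¹ 2⁻¹ < ∞ := by
  have hb : T3 2⁻¹ 2⁻¹ 2⁻¹ ≤ ∫⁻ x in Icc (0:ℝ) 1, ENNReal.ofReal (g0 x) * K0 := by
    unfold T3
    apply lintegral_mono_ae
    filter_upwards [ae_ne 2⁻¹] with x hx
    have : (∫⁻ y in Icc (0:ℝ) 1, ∫⁻ z in Icc (0:ℝ) 1,
        ENNReal.ofReal (1 / Real.sqrt ((2⁻¹ - x)^2 + (2⁻¹ - y)^2 + (2⁻¹ - z)^2)))
        ≤ ∫⁻ y in Icc (0:ℝ) 1, ENNReal.ofReal (g0 x * g0 y) := by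
      apply lintegral_mono_ae
      filter_upwards [ae_ne 2⁻¹] with y hy
      calc ∫⁻ z in Icc (0:ℝ) 1,
          ENNReal.ofReal (1 / Real.sqrt ((2⁻¹ - x)^2 + (2⁻¹ - y)^2 + (2⁻¹ - z)^2))
          ≤ ∫⁻ _ in Icc (0:ℝ) 1, ENNReal.ofReal (g0 x * g0 y) := by
            apply lintegral_mono
            intro z
            exact ENNReal.ofReal_le_ofReal (ptbound z hx hy)
        _ = ENNReal.ofReal (g0 x * g0 y) := by
            rw [setLIntegral_const, Real.volume_Icc]
            norm_num
    refine this.trans (le_of_eq ?_)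
    simp_rw [ENNReal.ofReal_mul (g0_nonneg x)]
    rw [lintegral_const_mul' _ _ ENNReal.ofReal_ne_top]
    rfl
  have he : (∫⁻ x in Icc (0:ℝ) 1, ENNReal.ofReal (g0 x) * K0) = K0 * K0 := by
    rw [lintegral_mul_const' _ _ K0_lt_top.ne]
    rfl
  rw [he] at hb
  exact lt_of_le_of_lt hb (ENNReal.mul_lt_top K0_lt_top K0_lt_top)

/-! ### Reduction from the Euclidean cube to the iterated integral -/

lemma pi_restrict_cube :
    (volume : Measure (Fin 3 → ℝ)).restrict (univ.pi fun _ => Icc (0:ℝ) 1)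
      = Measure.pi fun _ : Fin 3 => volume.restrict (Icc (0:ℝ) 1) := by
  refine (Measure.pi_eq (μ := fun _ : Fin 3 => volume.restrict (Icc (0:ℝ) 1))
    fun s hs => ?_).symm
  rw [Measure.restrict_apply (MeasurableSet.univ_pi hs), ← Set.pi_inter_distrib,
    volume_pi, Measure.pi_pi]
  exact Finset.prod_congr rfl fun i _ => (Measure.restrict_apply (hs i)).symm

lemma key (r : Fin 3 → ℝ) :
    (∫⁻ y in univ.pi fun _ : Fin 3 => Icc (0:ℝ) 1,
      ENNReal.ofReal (1 / Real.sqrt ((r 0 - y 0)^2 + (r 1 - y 1)^2 + (r 2 - y 2)^2)))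
    = T3 (r 0) (r 1) (r 2) := by
  have hf : Measurable fun y : Fin 3 → ℝ =>
      ENNReal.ofReal (1 / Real.sqrt ((r 0 - y 0)^2 + (r 1 - y 1)^2 + (r 2 - y 2)^2)) :=
    meas_aux (by fun_prop)
  rw [pi_restrict_cube,
    lintegral_eq_lmarginal_univ (fun _ => (0:ℝ)),
    show (Finset.univ : Finset (Fin 3)) = insert 0 (insert 1 {2}) from by decide,
    lmarginal_insert _ hf (by decide)]
  simp_rw [lmarginal_insert _ hf (show (1:Fin 3) ∉ ({2} : Finset (Fin 3)) from by decide),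
    lmarginal_singleton]
  unfold T3
  simp [Function.update_self, Function.update_of_ne]

lemma norm3 (v : EuclideanSpace ℝ (Fin 3)) :
    ‖v‖ = Real.sqrt ((v 0)^2 + (v 1)^2 + (v 2)^2) := by
  rw [EuclideanSpace.norm_eq, Fin.sum_univ_three]
  simp [Real.norm_eq_abs, sq_abs]

lemma euclid_lin (R : EuclideanSpace ℝ (Fin 3)) :
    (∫⁻ x in {x : EuclideanSpace ℝ (Fin 3) | ∀ i, x i ∈ Icc (0:ℝ) 1},
      ENNReal.ofReal (1 / ‖R - x‖))
    = T3 (R 0) (R 1) (R 2) := by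
  have mp := (EuclideanSpace.volume_preserving_symm_measurableEquiv_toLp (Fin 3)).symm
  have he := ((MeasurableEquiv.toLp 2 (Fin 3 → ℝ)).symm).symm.measurableEmbedding
  rw [← mp.setLIntegral_comp_preimage_emb he (fun x => ENNReal.ofReal (1 / ‖R - x‖)) _]
  have hpre : (⇑((MeasurableEquiv.toLp 2 (Fin 3 → ℝ)).symm).symm) ⁻¹'
      {x : EuclideanSpace ℝ (Fin 3) | ∀ i, x i ∈ Icc (0:ℝ) 1}
      = univ.pi fun _ : Fin 3 => Icc (0:ℝ) 1 := by
    ext y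
    simp only [mem_preimage, mem_setOf_eq, mem_univ_pi]
    exact Iff.rfl
  rw [hpre, ← key (fun i => R i)]
  apply lintegral_congr
  intro y
  congr 1
  rw [show R - ((MeasurableEquiv.toLp 2 (Fin 3 → ℝ)).symm).symm y
      = (fun v => v) (R - ((MeasurableEquiv.toLp 2 (Fin 3 → ℝ)).symm).symm y) from rfl]
  rw [norm3]
  rfl

end

end Stmt14Aux

/-- The integral `∫_Ω dx/‖R−x‖` over the unit cube is maximized when `R` is the
center of the cube. -/
theorem stmt_14 (c : EuclideanSpace ℝ (Fin 3)) (hc : ∀ i, c i = 1 / 2)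
    (R : EuclideanSpace ℝ (Fin 3)) :
    (∫ x in {x : EuclideanSpace ℝ (Fin 3) | ∀ i, x i ∈ Set.Icc (0 : ℝ) 1},
        1 / ‖R - x‖)
      ≤ ∫ x in {x : EuclideanSpace ℝ (Fin 3) | ∀ i, x i ∈ Set.Icc (0 : ℝ) 1},
          1 / ‖c - x‖ := by
  have hmeasf : ∀ Q : EuclideanSpace ℝ (Fin 3), Measurable fun x => 1 / ‖Q - x‖ := by
    intro Q
    simp only [one_div]
    exact ((measurable_const.sub measurable_id).norm).inv
  have hnn : ∀ (Q : EuclideanSpace ℝ (Fin 3)),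
      0 ≤ᵐ[volume.restrict {x : EuclideanSpace ℝ (Fin 3) | ∀ i, x i ∈ Set.Icc (0 : ℝ) 1}]
        fun x => 1 / ‖Q - x‖ :=
    fun Q => Filter.Eventually.of_forall fun x => by positivity
  have hlinR := Stmt14Aux.euclid_lin R
  have hlinc := Stmt14Aux.euclid_lin c
  simp only [hc, show (1/2 : ℝ) = 2⁻¹ from by norm_num] at hlinc
  have hineq : (∫⁻ x in {x : EuclideanSpace ℝ (Fin 3) | ∀ i, x i ∈ Set.Icc (0 : ℝ) 1},
      ENNReal.ofReal (1 / ‖R - x‖))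
      ≤ ∫⁻ x in {x : EuclideanSpace ℝ (Fin 3) | ∀ i, x i ∈ Set.Icc (0 : ℝ) 1},
        ENNReal.ofReal (1 / ‖c - x‖) := by
    rw [hlinR, hlinc]
    exact Stmt14Aux.main3 _ _ _
  have hfc : (∫⁻ x in {x : EuclideanSpace ℝ (Fin 3) | ∀ i, x i ∈ Set.Icc (0 : ℝ) 1},
      ENNReal.ofReal (1 / ‖c - x‖)) < ⊤ := by
    rw [hlinc]
    exact Stmt14Aux.T3_fin
  rw [integral_eq_lintegral_of_nonneg_ae (hnn R) ((hmeasf R).aestronglyMeasurable),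
    integral_eq_lintegral_of_nonneg_ae (hnn c) ((hmeasf c).aestronglyMeasurable)]
  exact ENNReal.toReal_mono hfc.ne hineq
end
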